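/- For c > 0, the function φ(y) = 2√c/√(1+c²y²) solves the ODE −φ'' + (c/2) φ³ − (3/16) φ⁵ = 0 on ℝ. -/

import Mathlib

/-! With `s = √(1 + b y²)` one has `s' = b y / s` and `s² = 1 + b y²`, so the derivatives of `a / s`
are rational in `y` and `s`. For `a = 2√c`, `b = c²`, clearing `s⁵` turns the equation into a
polynomial identity in `y` and `√c`, where `√c² = c`. -/

namespace AlgebraicSoliton

variable {b : ℝ}

lemma one_add_mul_sq_pos (hb : 0 ≤ b) (x : ℝ) : 0 < 1 + b * x ^ 2 := by positivity

lemma sqrt_one_add_mul_sq_pos (hb : 0 ≤ b) (x : ℝ) : 0 < √(1 + b * x ^ 2) :=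
  Real.sqrt_pos.mpr (one_add_mul_sq_pos hb x)

lemma sq_sqrt_one_add_mul_sq (hb : 0 ≤ b) (x : ℝ) : √(1 + b * x ^ 2) ^ 2 = 1 + b * x ^ 2 :=
  Real.sq_sqrt (one_add_mul_sq_pos hb x).le

lemma hasDerivAt_sqrt_one_add_mul_sq (hb : 0 ≤ b) (x : ℝ) :
    HasDerivAt (fun y => √(1 + b * y ^ 2)) (b * x / √(1 + b * x ^ 2)) x := by
  have hu : HasDerivAt (fun y => 1 + b * y ^ 2) (b * (2 * x)) x := by
    simpa using ((hasDerivAt_pow 2 x).const_mul b).const_add 1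
  refine (hu.sqrt (one_add_mul_sq_pos hb x).ne').congr_deriv ?_
  field_simp

lemma deriv_div_sqrt_one_add_mul_sq (a : ℝ) (hb : 0 ≤ b) :
    deriv (fun y => a / √(1 + b * y ^ 2)) = fun x => -(a * b * x) / √(1 + b * x ^ 2) ^ 3 := by
  funext x
  have hs := sqrt_one_add_mul_sq_pos hb x
  refine (((hasDerivAt_const x a).div (hasDerivAt_sqrt_one_add_mul_sq hb x) hs.ne').congr_deriv
    ?_).deriv
  field_simp
  ring

lemma deriv_deriv_div_sqrt_one_add_mul_sq (a : ℝ) (hb : 0 ≤ b) (x : ℝ) :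
    deriv (deriv fun y => a / √(1 + b * y ^ 2)) x =
      a * b * (2 * b * x ^ 2 - 1) / √(1 + b * x ^ 2) ^ 5 := by
  rw [deriv_div_sqrt_one_add_mul_sq a hb]
  have hs := sqrt_one_add_mul_sq_pos hb x
  have hsq := sq_sqrt_one_add_mul_sq hb x
  have hnum : HasDerivAt (fun y => -(a * b * y)) (-(a * b)) x := by
    simpa using ((hasDerivAt_id x).const_mul (a * b)).fun_neg
  refine ((hnum.div ((hasDerivAt_sqrt_one_add_mul_sq hb x).fun_pow 3) (by positivity)).congr_deriv
    ?_).deriv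
  field_simp
  linear_combination (-(a * b) * √(1 + b * x ^ 2) ^ 2) * hsq

end AlgebraicSoliton

theorem algebraic_soliton_profile_solves_ODE (c : ℝ) (hc : 0 < c) :
    ∀ φ : ℝ → ℝ,
      (φ = fun y => 2 * Real.sqrt c / Real.sqrt (1 + c ^ 2 * y ^ 2)) →
      ∀ y, -deriv (deriv φ) y + c / 2 * φ y ^ 3 - 3 / 16 * φ y ^ 5 = 0 := by
  rintro φ rfl y
  have hb : 0 ≤ c ^ 2 := sq_nonneg c
  rw [AlgebraicSoliton.deriv_deriv_div_sqrt_one_add_mul_sq _ hb]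
  have hs := AlgebraicSoliton.sqrt_one_add_mul_sq_pos hb y
  have hcc : √c ^ 2 = c := Real.sq_sqrt hc.le
  field_simp
  rw [AlgebraicSoliton.sq_sqrt_one_add_mul_sq hb, show √c ^ 4 = (√c ^ 2) ^ 2 by ring, hcc]
  ring
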